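/- Let S be a set of finite words over a finite alphabet A closed under taking subwords, S_n = S ∩ A^n, and Y(S) = {y ∈ A^ℤ : for all k, y([-k,k]) is a subword of some word in S}. Then limsup_{n→∞} (1/n) ln |S_n| = h(Y(S)), the topological entropy of the subshift Y(S). -/

import Mathlib

open Filter Topology MeasureTheory

variable {A : Type*}

/-- The left shift on bi-infinite sequences. -/
def shift (x : ℤ → A) : ℤ → A := fun n => x (n + 1)

/-- The word `x([i, i+n))` read off from a point `x`. -/
def wordAt (x : ℤ → A) (i : ℤ) (n : ℕ) : List A :=
  (List.range n).map fun j => x (i + j)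

/-- A subshift: a closed, shift-invariant subset of the full shift. -/
def IsSubshift [TopologicalSpace A] (X : Set (ℤ → A)) : Prop :=
  IsClosed X ∧ ∀ x ∈ X, shift x ∈ X

/-- The set of words of length `n` appearing in points of `X`. -/
def language (X : Set (ℤ → A)) (n : ℕ) : Set (List A) :=
  {w | ∃ x ∈ X, ∃ i : ℤ, wordAt x i n = w}

/-- Topological entropy of a subshift, as a limsup. -/
noncomputable def entropy (X : Set (ℤ → A)) : ℝ :=
  Filter.limsup (fun n : ℕ => Real.log ((language X n).ncard) / n) Filter.atTop

/-- The set `C_n` of code words of length `n`. -/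
def Cwords (C : Set (List A)) (n : ℕ) : Set (List A) := {w ∈ C | w.length = n}

/-- The generating function `f_C(α) = ∑_{j ≥ 1} |C_j| e^{-jα}`, valued in `[0, ∞]`. -/
noncomputable def fC (C : Set (List A)) (α : ℝ) : ENNReal :=
  ∑' n : ℕ, ((Cwords C (n + 1)).ncard : ENNReal) *
    ENNReal.ofReal (Real.exp (-((n : ℝ) + 1) * α))

/-- The set `B_C` of bi-infinite concatenations of code words. -/
def Bset (C : Set (List A)) : Set (ℤ → A) :=
  {x | ∃ s : ℤ → ℤ, StrictMono s ∧ Tendsto s atTop atTop ∧ Tendsto s atBot atBot ∧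
    ∀ k : ℤ, wordAt x (s k) (s (k + 1) - s k).toNat ∈ C}

/-- The set `L_C` of limits of single code words. -/
def Lset (C : Set (List A)) : Set (ℤ → A) :=
  {x | ∀ k : ℕ, ∃ w ∈ C, wordAt x (-(k : ℤ)) (2 * k + 1) <:+: w}

/-- The coded subshift `X_C`, the closure of `B_C`. -/
def Xset [TopologicalSpace A] (C : Set (List A)) : Set (ℤ → A) := closure (Bset C)

/-- `C` has unique decomposition: no finite word is a concatenation of `C`-words
in two different ways. -/
def UniqueDecomposition (C : Set (List A)) : Prop :=
  ∀ l l' : List (List A), (∀ w ∈ l, w ∈ C) → (∀ w ∈ l', w ∈ C) →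
    l.flatten = l'.flatten → l = l'

/-- `n`-letter prefixes of words in `C`. -/
def Pn (C : Set (List A)) (n : ℕ) : Set (List A) :=
  {w | w.length = n ∧ ∃ v ∈ C, w <+: v}

/-- `n`-letter suffixes of words in `C`. -/
def Sn (C : Set (List A)) (n : ℕ) : Set (List A) :=
  {w | w.length = n ∧ ∃ v ∈ C, w <:+ v}

/-- `n`-letter subwords of words in `C`. -/
def Wn (C : Set (List A)) (n : ℕ) : Set (List A) :=
  {w | w.length = n ∧ ∃ v ∈ C, w <:+: v}

/-- The measure of the cylinder set of a word. -/
noncomputable def cylMeasure [MeasurableSpace A] (μ : Measure (ℤ → A)) (w : List A) : ℝ :=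
  (μ {x : ℤ → A | wordAt x 0 w.length = w}).toReal

/-- Measure-theoretic (Kolmogorov–Sinai) entropy of a shift-invariant measure. -/
noncomputable def measEntropy [MeasurableSpace A] [Fintype A] [DecidableEq A]
    (μ : Measure (ℤ → A)) : ℝ :=
  Filter.limsup (fun n : ℕ =>
    (-1 / (n : ℝ)) * ∑ w : Fin n → A,
      cylMeasure μ (List.ofFn w) * Real.log (cylMeasure μ (List.ofFn w))) Filter.atTop

/-!
Subword closure makes `log |S_n|` subadditive, so by Fekete's lemma `(1/n) log |S_n|` converges
to some `h` with `h n ≤ log |S_n|` for all `n`. Every word of `Y(S)` is a word of `S`, which gives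
`h(Y(S)) ≤ h`. Conversely, cutting words of `S` of length `n + k` after `n` letters gives
`|S_{n+k}| ≤ |R_{n,k}| |S_k|`, where `R_{n,k}` is the set of `n`-words extendable to the right by
`k` letters inside `S`. Since `log |S_k| - (h - ε) k → ∞`, some large `k` has
`log |S_{n+k}| - log |S_k| ≥ (h - ε) n`, so there are at least `e^{h n}` words extendable
arbitrarily far to the right. Running the same argument on the left, inside the set of
right-extendable words, gives `e^{h n}` words extendable arbitrarily far on both sides, and a
pigeonhole (König) argument places each of them in a point of `Y(S)`.
-/

lemma wordAt_eq_map (x : ℤ → A) (i : ℤ) (n : ℕ) :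
    wordAt x i n = (List.range n).map fun j : ℕ => x (i + j) := by
  simp [wordAt, ← List.map_eq_flatMap]

@[simp]
lemma length_wordAt (x : ℤ → A) (i : ℤ) (n : ℕ) : (wordAt x i n).length = n := by
  simp [wordAt_eq_map]

lemma getElem_wordAt (x : ℤ → A) (i : ℤ) (n t : ℕ) (ht : t < (wordAt x i n).length) :
    (wordAt x i n)[t] = x (i + t) := by
  simp [wordAt_eq_map]

lemma wordAt_add (x : ℤ → A) (i : ℤ) (m n : ℕ) :
    wordAt x i (m + n) = wordAt x i m ++ wordAt x (i + m) n := by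
  simp only [wordAt_eq_map, List.range_add, List.map_append, List.map_map]
  congr 1
  refine List.map_congr_left fun j _ => ?_
  simp only [Function.comp_apply, Nat.cast_add, add_assoc]

lemma wordAt_infix_wordAt (x : ℤ → A) {i j : ℤ} {m n : ℕ} (hji : j ≤ i)
    (hle : i + m ≤ j + n) : wordAt x i m <:+: wordAt x j n := by
  obtain ⟨a, rfl⟩ : ∃ a : ℕ, i = j + a := ⟨(i - j).toNat, by omega⟩
  obtain ⟨b, rfl⟩ : ∃ b : ℕ, n = a + m + b := ⟨n - a - m, by omega⟩
  refine ⟨wordAt x j a, wordAt x (j + a + m) b, ?_⟩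
  rw [wordAt_add, wordAt_add, Nat.cast_add, add_assoc j]

open Real in
lemma Real.log_natCast_le_log_natCast {a b : ℕ} (h : a ≤ b) : log a ≤ log b := by
  rcases Nat.eq_zero_or_pos a with rfl | ha
  · simpa using log_natCast_nonneg b
  · exact log_le_log (by exact_mod_cast ha) (by exact_mod_cast h)

open Real in
lemma Real.log_natCast_le_add_of_le_mul {a b c : ℕ} (h : a ≤ b * c) :
    log a ≤ log b + log c := by
  rcases Nat.eq_zero_or_pos a with rfl | ha
  · simpa using add_nonneg (log_natCast_nonneg b) (log_natCast_nonneg c)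
  · have hb : b ≠ 0 := by rintro rfl; omega
    have hc : c ≠ 0 := by rintro rfl; omega
    rw [← log_mul (by exact_mod_cast hb) (by exact_mod_cast hc)]
    exact log_le_log (by exact_mod_cast ha) (by exact_mod_cast h)

lemma Set.ncard_image2_le {α β γ : Type*} (f : α → β → γ) {s : Set α} {t : Set β}
    (hs : s.Finite) (ht : t.Finite) : (Set.image2 f s t).ncard ≤ s.ncard * t.ncard := by
  rw [← Set.image_uncurry_prod, ← Set.ncard_prod]
  exact Set.ncard_image_le (hs.prod ht)

lemma exists_le_add_of_tendsto_atTop {β : Type*} [LinearOrder β] [NoMaxOrder β] {φ : ℕ → β}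
    (hφ : Tendsto φ atTop atTop) {n : ℕ} (hn : 0 < n) (K : ℕ) :
    ∃ k ≥ K, φ k ≤ φ (n + k) := by
  by_contra! hdec
  have hbound : ∀ j, φ (K + j * n) ≤ φ K := by
    intro j
    induction j with
    | zero => simp
    | succ j ih =>
      calc φ (K + (j + 1) * n) = φ (n + (K + j * n)) := by ring_nf
        _ ≤ φ (K + j * n) := (hdec _ (Nat.le_add_right K _)).le
        _ ≤ φ K := ih
  obtain ⟨M, hM⟩ := eventually_atTop.mp (hφ.eventually_gt_atTop (φ K))
  exact (hM (K + M * n) (by nlinarith)).not_ge (hbound M)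

lemma Set.exists_subset_iInter_of_antitone {α : Type*} {T : ℕ → Set α} (hT : Antitone T)
    (hT0 : (T 0).Finite) : ∃ K, T K ⊆ ⋂ k, T k := by
  have hfin : (T 0 \ ⋂ k, T k).Finite := hT0.sdiff
  have hleaves : ∀ z ∈ T 0 \ ⋂ k, T k, ∃ k, z ∉ T k := by
    intro z hz
    simpa using hz.2
  choose! escape hescape using hleaves
  obtain ⟨K, hK⟩ := (hfin.image escape).bddAbove
  refine ⟨K, fun z hzK => ?_⟩
  by_contra hz
  have hz' : z ∈ T 0 \ ⋂ k, T k := ⟨hT (Nat.zero_le K) hzK, hz⟩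
  exact hescape z hz' (hT (hK (Set.mem_image_of_mem escape hz')) hzK)

open Real in
lemma mul_le_log_ncard_iInter {α : Type*} {c : ℕ → ℕ} {h : ℝ}
    (hc : ∀ m, h * m ≤ log (c m)) {T : ℕ → Set α} (hT : Antitone T) (hT0 : (T 0).Finite)
    {n : ℕ} (hsplit : ∀ k, c (n + k) ≤ (T k).ncard * c k) :
    h * n ≤ log (⋂ k, T k).ncard := by
  rcases Nat.eq_zero_or_pos n with rfl | hn
  · simpa using log_natCast_nonneg _
  obtain ⟨K, hK⟩ := Set.exists_subset_iInter_of_antitone hT hT0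
  have hfin : (⋂ k, T k).Finite := hT0.subset (Set.iInter_subset T 0)
  have hnR : (0 : ℝ) < n := by exact_mod_cast hn
  rw [← le_div_iff₀ hnR]
  refine le_of_forall_sub_le fun ε hε => ?_
  rw [le_div_iff₀ hnR]
  set φ : ℕ → ℝ := fun m => log (c m) - (h - ε) * m
  have hφ : Tendsto φ atTop atTop := by
    refine tendsto_atTop_mono (fun m => ?_) (tendsto_natCast_atTop_atTop.const_mul_atTop hε)
    have := hc m
    simp only [φ]
    linarith
  obtain ⟨k, hkK, hk⟩ := exists_le_add_of_tendsto_atTop hφ hn K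
  have hTk : log (T k).ncard ≤ log (⋂ k, T k).ncard :=
    Real.log_natCast_le_log_natCast (Set.ncard_le_ncard ((hT hkK).trans hK) hfin)
  have hlog := Real.log_natCast_le_add_of_le_mul (hsplit k)
  simp only [φ, Nat.cast_add] at hk
  linarith

lemma Subadditive.lim_mul_le {u : ℕ → ℝ} (hu : Subadditive u)
    (hbdd : BddBelow (Set.range fun n => u n / n)) (n : ℕ) : hu.lim * n ≤ u n := by
  rcases Nat.eq_zero_or_pos n with rfl | hn
  · simpa using hu 0 0
  · have hnR : (0 : ℝ) < n := by exact_mod_cast hn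
    exact (le_div_iff₀ hnR).mp (hu.lim_le_div hbdd hn.ne')

def SubwordClosed (S : Set (List A)) : Prop := ∀ w ∈ S, ∀ v, v <:+: w → v ∈ S

def rightExtBy (S : Set (List A)) (k : ℕ) : Set (List A) :=
  {z | ∃ v, v.length = k ∧ z ++ v ∈ S}

def leftExtBy (S : Set (List A)) (k : ℕ) : Set (List A) :=
  {z | ∃ u, u.length = k ∧ u ++ z ∈ S}

def rightExtendable (S : Set (List A)) : Set (List A) := ⋂ k, rightExtBy S k

def leftExtendable (S : Set (List A)) : Set (List A) := ⋂ k, leftExtBy S k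

def twoSidedExtendable (S : Set (List A)) : Set (List A) :=
  {w | ∀ k, ∃ u v : List A, u.length = k ∧ v.length = k ∧ u ++ w ++ v ∈ S}

section Extension

variable {S : Set (List A)}

lemma SubwordClosed.antitone_rightExtBy (hS : SubwordClosed S) : Antitone (rightExtBy S) := by
  refine antitone_nat_of_succ_le fun k z ⟨v, hv, hzv⟩ => ⟨v.take k, by simp [hv], ?_⟩
  refine hS _ hzv _ (List.IsPrefix.isInfix ⟨v.drop k, ?_⟩)
  rw [List.append_assoc, List.take_append_drop]

lemma SubwordClosed.antitone_leftExtBy (hS : SubwordClosed S) : Antitone (leftExtBy S) := by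
  refine antitone_nat_of_succ_le fun k z ⟨u, hu, huz⟩ => ⟨u.drop 1, by simp [hu], ?_⟩
  refine hS _ huz _ (List.IsSuffix.isInfix ⟨u.take 1, ?_⟩)
  rw [← List.append_assoc, List.take_append_drop]

lemma subwordClosed_rightExtendable (hS : SubwordClosed S) :
    SubwordClosed (rightExtendable S) := by
  rintro z hz w ⟨s, t, rfl⟩
  refine Set.mem_iInter.mpr fun m => ?_
  obtain ⟨v, hv, hzv⟩ := Set.mem_iInter.mp hz m
  refine ⟨(t ++ v).take m, by simp [hv], hS _ hzv _ ⟨s, (t ++ v).drop m, ?_⟩⟩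
  simp only [List.append_assoc, List.take_append_drop]

lemma leftExtendable_rightExtendable_subset :
    leftExtendable (rightExtendable S) ⊆ twoSidedExtendable S := by
  intro w hw k
  obtain ⟨u, hu, huw⟩ := Set.mem_iInter.mp hw k
  obtain ⟨v, hv, huwv⟩ := Set.mem_iInter.mp huw k
  exact ⟨u, v, hu, hv, huwv⟩

end Extension

section Counting

lemma Cwords_finite [Finite A] (C : Set (List A)) (n : ℕ) : (Cwords C n).Finite :=
  (List.finite_length_eq A n).subset fun _ hw => hw.2

lemma Cwords_iInter {ι : Type*} [Nonempty ι] (C : ι → Set (List A)) (n : ℕ) :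
    Cwords (⋂ i, C i) n = ⋂ i, Cwords (C i) n := by
  ext w
  simp [Cwords, forall_and]

lemma Cwords_mono {C D : Set (List A)} (h : C ⊆ D) (n : ℕ) : Cwords C n ⊆ Cwords D n :=
  fun _ hw => ⟨h hw.1, hw.2⟩

lemma ncard_Cwords_add_le_of_take_drop [Finite A] {C P Q : Set (List A)} {m n : ℕ}
    (hsplit : ∀ z ∈ C, z.length = m + n → z.take m ∈ P ∧ z.drop m ∈ Q) :
    (Cwords C (m + n)).ncard ≤ (Cwords P m).ncard * (Cwords Q n).ncard := by
  have hsub : Cwords C (m + n) ⊆ Set.image2 (· ++ ·) (Cwords P m) (Cwords Q n) := by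
    rintro z ⟨hz, hlen⟩
    obtain ⟨hP, hQ⟩ := hsplit z hz hlen
    exact ⟨_, ⟨hP, by simp [hlen]⟩, _, ⟨hQ, by simp [hlen]⟩, List.take_append_drop m z⟩
  exact (Set.ncard_le_ncard hsub ((Cwords_finite P m).image2 _ (Cwords_finite Q n))).trans
    (Set.ncard_image2_le _ (Cwords_finite P m) (Cwords_finite Q n))

variable [Finite A] {S : Set (List A)}

lemma SubwordClosed.ncard_Cwords_add_le (hS : SubwordClosed S) (m n : ℕ) :
    (Cwords S (m + n)).ncard ≤ (Cwords S m).ncard * (Cwords S n).ncard :=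
  ncard_Cwords_add_le_of_take_drop fun z hz _ =>
    ⟨hS z hz _ (z.take_prefix m).isInfix, hS z hz _ (z.drop_suffix m).isInfix⟩

lemma SubwordClosed.ncard_Cwords_add_le_rightExtBy (hS : SubwordClosed S) (n k : ℕ) :
    (Cwords S (n + k)).ncard ≤ (Cwords (rightExtBy S k) n).ncard * (Cwords S k).ncard :=
  ncard_Cwords_add_le_of_take_drop fun z hz hlen =>
    ⟨⟨z.drop n, by simp [hlen], by rwa [List.take_append_drop]⟩,
      hS z hz _ (z.drop_suffix n).isInfix⟩

lemma SubwordClosed.ncard_Cwords_add_le_leftExtBy (hS : SubwordClosed S) (n k : ℕ) :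
    (Cwords S (n + k)).ncard ≤ (Cwords (leftExtBy S k) n).ncard * (Cwords S k).ncard := by
  rw [add_comm, mul_comm]
  exact ncard_Cwords_add_le_of_take_drop fun z hz hlen =>
    ⟨hS z hz _ (z.take_prefix k).isInfix,
      ⟨z.take k, by simp [hlen], by rwa [List.take_append_drop]⟩⟩

open Real in
lemma SubwordClosed.mul_le_log_ncard_rightExtendable (hS : SubwordClosed S) {h : ℝ}
    (hh : ∀ m, h * m ≤ log (Cwords S m).ncard) (n : ℕ) :
    h * n ≤ log (Cwords (rightExtendable S) n).ncard := by
  rw [rightExtendable, Cwords_iInter]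
  exact mul_le_log_ncard_iInter hh (fun _ _ hkl => Cwords_mono (hS.antitone_rightExtBy hkl) n)
    (Cwords_finite _ n) (hS.ncard_Cwords_add_le_rightExtBy n)

open Real in
lemma SubwordClosed.mul_le_log_ncard_leftExtendable (hS : SubwordClosed S) {h : ℝ}
    (hh : ∀ m, h * m ≤ log (Cwords S m).ncard) (n : ℕ) :
    h * n ≤ log (Cwords (leftExtendable S) n).ncard := by
  rw [leftExtendable, Cwords_iInter]
  exact mul_le_log_ncard_iInter hh (fun _ _ hkl => Cwords_mono (hS.antitone_leftExtBy hkl) n)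
    (Cwords_finite _ n) (hS.ncard_Cwords_add_le_leftExtBy n)

open Real in
lemma SubwordClosed.mul_le_log_ncard_twoSidedExtendable (hS : SubwordClosed S) {h : ℝ}
    (hh : ∀ m, h * m ≤ log (Cwords S m).ncard) (n : ℕ) :
    h * n ≤ log (Cwords (twoSidedExtendable S) n).ncard :=
  ((subwordClosed_rightExtendable hS).mul_le_log_ncard_leftExtendable
      (hS.mul_le_log_ncard_rightExtendable hh) n).trans
    (Real.log_natCast_le_log_natCast (Set.ncard_le_ncard
      (Cwords_mono leftExtendable_rightExtendable_subset n) (Cwords_finite _ n)))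

end Counting

section Subshift

variable {S : Set (List A)}

lemma SubwordClosed.exists_cons_append_mem_twoSidedExtendable [Finite A]
    (hS : SubwordClosed S) {w : List A} (hw : w ∈ twoSidedExtendable S) :
    ∃ a b, a :: w ++ [b] ∈ twoSidedExtendable S := by
  have hext : ∀ k, ∃ u a b v,
      u.length = k ∧ v.length = k ∧ u ++ a :: w ++ b :: v ∈ S := by
    intro k
    obtain ⟨u', v', hu', hv', hmem⟩ := hw (k + 1)
    obtain ⟨b, v, rfl⟩ := List.exists_cons_of_length_eq_add_one hv'
    obtain rfl | ⟨u, a, rfl⟩ := u'.eq_nil_or_concat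
    · simp at hu'
    · refine ⟨u, a, b, v, by simpa using hu', by simpa using hv', ?_⟩
      simpa using hmem
  choose u a b v hu hv hmem using hext
  obtain ⟨⟨a₀, b₀⟩, hinf⟩ := Finite.exists_infinite_fiber fun k => (a k, b k)
  refine ⟨a₀, b₀, fun k => ?_⟩
  obtain ⟨k', hk', hkk'⟩ := (Set.infinite_coe_iff.mp hinf).exists_gt k
  simp only [Set.mem_preimage, Set.mem_singleton_iff, Prod.mk.injEq] at hk'
  obtain ⟨rfl, rfl⟩ := hk'
  refine ⟨(u k').drop (k' - k), (v k').take k, by simp [hu]; omega, by simp [hv]; omega, ?_⟩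
  refine hS _ (hmem k') _ ⟨(u k').take (k' - k), (v k').drop k, ?_⟩
  simp only [List.append_assoc, List.cons_append, List.take_append_drop]
  rw [← List.append_assoc, List.take_append_drop, List.nil_append]

lemma exists_wordAt_eq_of_forall_cons_append {W : ℕ → List A}
    (hW : ∀ k, ∃ a b, W (k + 1) = a :: W k ++ [b]) :
    ∃ y : ℤ → A, ∀ k : ℕ, wordAt y (-k) ((W 0).length + 2 * k) = W k := by
  have hlen : ∀ k, (W k).length = (W 0).length + 2 * k := by
    intro k
    induction k with
    | zero => rfl
    | succ k ih => obtain ⟨a, b, hk⟩ := hW k; simp [hk, ih]; ring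
  have hmid : ∀ k j, ∃ u v, u.length = j ∧ W (k + j) = u ++ W k ++ v := by
    intro k j
    induction j with
    | zero => exact ⟨[], [], rfl, by simp⟩
    | succ j ih =>
      obtain ⟨u, v, hu, huv⟩ := ih
      obtain ⟨a, b, hab⟩ := hW (k + j)
      exact ⟨a :: u, v ++ [b], by simp [hu], by rw [← add_assoc, hab, huv]; simp⟩
  have hget : ∀ k j t, t < (W k).length → (W (k + j))[t + j]? = (W k)[t]? := by
    intro k j t ht
    obtain ⟨u, v, rfl, huv⟩ := hmid k j
    rw [huv, List.append_assoc, add_comm, List.getElem?_append_right (by omega),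
      Nat.add_sub_cancel_left, List.getElem?_append_left ht]
  have : Inhabited A := ⟨(W 1).head (List.ne_nil_of_length_pos (by rw [hlen]; omega))⟩
  -- `y i` is read off `W (|i| + 1)`, which covers position `i`; the default is never used.
  refine ⟨fun i => (W (i.natAbs + 1)).getD (i + (i.natAbs + 1 : ℕ)).toNat default,
    fun k => ?_⟩
  refine List.ext_getElem? fun t => ?_
  rcases lt_or_ge t ((W 0).length + 2 * k) with ht | ht
  · set K := (-(k : ℤ) + t).natAbs + 1
    have h1 : (W (K + k))[(-(k : ℤ) + t + K).toNat + k]? = (W K)[(-(k : ℤ) + t + K).toNat]? :=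
      hget K k _ (by rw [hlen]; omega)
    have h2 : (W (k + K))[t + K]? = (W k)[t]? := hget k K t (by rw [hlen]; omega)
    rw [List.getElem?_eq_getElem (by simpa using ht), getElem_wordAt, List.getD_eq_getElem?_getD,
      ← h1, ← h2, add_comm K k, show (-(k : ℤ) + t + K).toNat + k = t + K by omega, h2,
      List.getElem?_eq_getElem (by rw [hlen]; omega), Option.getD_some]
  · rw [List.getElem?_eq_none (by simpa using ht), List.getElem?_eq_none (by rw [hlen]; omega)]

lemma SubwordClosed.language_Lset_subset (hS : SubwordClosed S) (n : ℕ) :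
    language (Lset S) n ⊆ Cwords S n := by
  rintro _ ⟨y, hy, i, rfl⟩
  obtain ⟨w, hw, hinf⟩ := hy (i.natAbs + n)
  refine ⟨hS w hw _ ((wordAt_infix_wordAt y ?_ ?_).trans hinf), length_wordAt y i n⟩ <;> omega

lemma SubwordClosed.exists_mem_Lset_wordAt_eq [Finite A] (hS : SubwordClosed S) {w : List A}
    (hw : w ∈ twoSidedExtendable S) : ∃ y ∈ Lset S, wordAt y 0 w.length = w := by
  choose a b hab using fun z : twoSidedExtendable S =>
    hS.exists_cons_append_mem_twoSidedExtendable z.2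
  let W : ℕ → twoSidedExtendable S :=
    fun k => Nat.rec ⟨w, hw⟩ (fun _ z => ⟨a z :: z.1 ++ [b z], hab z⟩) k
  obtain ⟨y, hy⟩ := exists_wordAt_eq_of_forall_cons_append (W := fun k => (W k).1)
    fun k => ⟨a (W k), b (W k), rfl⟩
  refine ⟨y, fun k => ?_, hy 0⟩
  obtain ⟨u, v, hu, hv, hmem⟩ := (W (k + 1)).2 0
  rw [List.length_eq_zero_iff.mp hu, List.length_eq_zero_iff.mp hv, ← hy (k + 1)] at hmem
  refine ⟨_, by simpa using hmem, wordAt_infix_wordAt y (by omega) ?_⟩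
  push_cast
  omega

lemma SubwordClosed.Cwords_twoSidedExtendable_subset_language [Finite A]
    (hS : SubwordClosed S) (n : ℕ) : Cwords (twoSidedExtendable S) n ⊆ language (Lset S) n := by
  rintro w ⟨hw, rfl⟩
  obtain ⟨y, hy, hyw⟩ := hS.exists_mem_Lset_wordAt_eq hw
  exact ⟨y, hy, 0, hyw⟩

open Real in
lemma SubwordClosed.log_ncard_language_Lset_le [Finite A] (hS : SubwordClosed S) (n : ℕ) :
    log (language (Lset S) n).ncard ≤ log (Cwords S n).ncard :=
  Real.log_natCast_le_log_natCast
    (Set.ncard_le_ncard (hS.language_Lset_subset n) (Cwords_finite S n))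

open Real in
lemma SubwordClosed.log_ncard_twoSidedExtendable_le [Finite A] (hS : SubwordClosed S) (n : ℕ) :
    log (Cwords (twoSidedExtendable S) n).ncard ≤ log (language (Lset S) n).ncard :=
  Real.log_natCast_le_log_natCast (Set.ncard_le_ncard
    (hS.Cwords_twoSidedExtendable_subset_language n)
    ((Cwords_finite S n).subset (hS.language_Lset_subset n)))

end Subshift

/-- for `S` closed under subwords,
`limsup (1/n) log |S_n| = h(Y(S))`. -/
theorem stmt4 [Fintype A] (S : Set (List A))
    (hS : ∀ w ∈ S, ∀ v, v <:+: w → v ∈ S) :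
    Filter.limsup (fun n : ℕ => Real.log (({w ∈ S | w.length = n} : Set (List A)).ncard) / n)
        Filter.atTop
      = entropy {y : ℤ → A | ∀ k : ℕ, ∃ w ∈ S, wordAt y (-(k : ℤ)) (2 * k + 1) <:+: w} := by
  have hS : SubwordClosed S := hS
  set u : ℕ → ℝ := fun n => Real.log (Cwords S n).ncard
  have hu : Subadditive u := fun m n =>
    Real.log_natCast_le_add_of_le_mul (hS.ncard_Cwords_add_le m n)
  have hbdd : BddBelow (Set.range fun n => u n / n) :=
    ⟨0, by rintro _ ⟨n, rfl⟩; exact div_nonneg (Real.log_natCast_nonneg _) n.cast_nonneg⟩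
  have hlim : Tendsto (fun n => u n / n) atTop (𝓝 hu.lim) := hu.tendsto_lim hbdd
  have hlower : ∀ n > 0, hu.lim ≤ Real.log (language (Lset S) n).ncard / n := fun n hn =>
    (le_div_iff₀ (by exact_mod_cast hn)).mpr
      ((hS.mul_le_log_ncard_twoSidedExtendable (hu.lim_mul_le hbdd) n).trans
        (hS.log_ncard_twoSidedExtendable_le n))
  have hupper : ∀ n : ℕ, Real.log (language (Lset S) n).ncard / n ≤ u n / n := fun n =>
    div_le_div_of_nonneg_right (hS.log_ncard_language_Lset_le n) n.cast_nonneg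
  have hY : Tendsto (fun n : ℕ => Real.log (language (Lset S) n).ncard / n) atTop
      (𝓝 hu.lim) :=
    tendsto_of_tendsto_of_tendsto_of_le_of_le' tendsto_const_nhds hlim
      ((eventually_gt_atTop 0).mono hlower) (.of_forall hupper)
  exact hlim.limsup_eq.trans hY.limsup_eq.symm
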